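/- With pastification Π_d extended to formulas as above, the robustness value is preserved under the time shift: μ(w, ν, φ) = μ(w, ν′, Π_d(φ)), where ν′ = ν[t ← ν(t) + d]. -/
import Mathlib


inductive Term (V F : Type) where
  | const : ℚ → Term V F
  | rconst : ℝ → Term V F
  | var : V → Term V F
  | add : Term V F → Term V F → Term V F
  | sub : Term V F → Term V F → Term V F
  | app : F → Term V F → Term V F

noncomputable def Term.sem {V F W : Type} (sig : W → F → ℝ → ℝ) :
    Term V F → W → (V → ℝ) → ℝ
  | .const n, _, _ => (n : ℝ)
  | .rconst r, _, _ => r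
  | .var x, _, ν => ν x
  | .add a b, w, ν => a.sem sig w ν + b.sem sig w ν
  | .sub a b, w, ν => a.sem sig w ν - b.sem sig w ν
  | .app f τ, w, ν => sig w f (τ.sem sig w ν)

inductive Formula (V F : Type) where
  | atom : Term V F → Term V F → Formula V F
  | not : Formula V F → Formula V F
  | or : Formula V F → Formula V F → Formula V F
  | ex : V → Set ℝ → Formula V F → Formula V F

def Formula.sat {V F W : Type} [DecidableEq V] (sig : W → F → ℝ → ℝ) (w : W) :
    Formula V F → (V → ℝ) → Prop
  | .atom a b, ν => a.sem sig w ν < b.sem sig w ν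
  | .not φ, ν => ¬ φ.sat sig w ν
  | .or φ ψ, ν => φ.sat sig w ν ∨ ψ.sat sig w ν
  | .ex x J φ, ν => ∃ a ∈ J, φ.sat sig w (Function.update ν x a)

noncomputable def Formula.mu {V F W : Type} [DecidableEq V] (sig : W → F → ℝ → ℝ) (w : W) :
    Formula V F → (V → ℝ) → EReal
  | .atom a b, ν => ((b.sem sig w ν - a.sem sig w ν : ℝ) : EReal)
  | .not φ, ν => - φ.mu sig w ν
  | .or φ ψ, ν => max (φ.mu sig w ν) (ψ.mu sig w ν)
  | .ex x J φ, ν => ⨆ a ∈ J, φ.mu sig w (Function.update ν x a)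

def Term.past {V F : Type} [DecidableEq V] (t : V) (d : ℝ) : Term V F → Term V F
  | .const n => .const n
  | .rconst r => .rconst r
  | .var x => if x = t then .sub (.var t) (.rconst d) else .var x
  | .add a b => .add (a.past t d) (b.past t d)
  | .sub a b => .sub (a.past t d) (b.past t d)
  | .app f τ => .app f (τ.past t d)

def Formula.past {V F : Type} [DecidableEq V] (t : V) (d : ℝ) : Formula V F → Formula V F
  | .atom a b => .atom (a.past t d) (b.past t d)
  | .not φ => .not (φ.past t d)
  | .or φ ψ => .or (φ.past t d) (ψ.past t d)
  | .ex x J φ => .ex x J (φ.past t d)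

def Formula.apart {V F : Type} (t : V) : Formula V F → Prop
  | .atom _ _ => True
  | .not φ => φ.apart t
  | .or φ ψ => φ.apart t ∧ ψ.apart t
  | .ex x _ φ => x ≠ t ∧ φ.apart t

theorem pastify_sem {V F W : Type} [DecidableEq V]
    (sig : W → F → ℝ → ℝ) (t : V) (d : ℝ) (w : W) (ν : V → ℝ) (τ : Term V F) :
    τ.sem sig w ν = (τ.past t d).sem sig w (Function.update ν t (ν t + d)) := by
  induction τ with
  | const n => rfl
  | rconst r => rfl
  | var x =>
    by_cases h : x = t
    · subst h; simp [Term.past, Term.sem]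
    · simp [Term.past, h, Term.sem, Function.update_of_ne h]
  | add a b ha hb => simp [Term.past, Term.sem, ha, hb]
  | sub a b ha hb => simp [Term.past, Term.sem, ha, hb]
  | app f τ ih => simp [Term.past, Term.sem, ih]

theorem pastify_mu {V F W : Type} [DecidableEq V]
    (sig : W → F → ℝ → ℝ) (t : V) (d : ℝ) (w : W) (ν : V → ℝ)
    (φ : Formula V F) (hap : φ.apart t) :
    φ.mu sig w ν = (φ.past t d).mu sig w (Function.update ν t (ν t + d)) := by
  induction φ generalizing ν with
  | atom a b => simp [Formula.mu, Formula.past, ← pastify_sem]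
  | not φ ih => simp [Formula.mu, Formula.past, ih _ hap]
  | or φ ψ ih1 ih2 => simp [Formula.mu, Formula.past, ih1 _ hap.1, ih2 _ hap.2]
  | ex x J φ ih =>
    simp only [Formula.mu, Formula.past]
    refine iSup_congr fun a => iSup_congr fun _ => ?_
    rw [ih _ hap.2]
    congr 1
    rw [Function.update_comm hap.1, Function.update_of_ne (Ne.symm hap.1)]
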